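/- Let F be a field, n ≥ 1, and let u, v ∈ F^{n+1} be linearly independent. The kernel of the F-linear map from the space of homogeneous degree-d polynomials in n+1 variables to the space of homogeneous degree-d polynomials in two variables s, t given by P ↦ ((s,t) ↦ P(s·u + t·v)) has dimension binomial(n + d, n) − (d + 1). (This computes h⁰(ℙⁿ, O(d) ⊗ I_ℓ) = h⁰(O(d)) − h⁰(O_ℓ(d)) for a line ℓ, as used in the dimension count bounding the image of the modulus map.) -/

import Mathlib

/-!
Restriction to the line is the substitution `X ↦ M (s, t)` by the linear forms given by the
rows of the `(n + 1) × 2` matrix `M` with columns `u, v`. Since `u, v` are independent, `M` has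
a left inverse `N`, and substituting by the rows of `N` is a section of the restriction that
preserves degree `d`. So restriction maps degree-`d` forms onto binary degree-`d` forms, and
rank–nullity with the stars-and-bars count `dim = (#variables + d - 1).choose d` gives the kernel
dimension.
-/

open MvPolynomial

theorem Submodule.finrank_inf_ker_add_finrank_map {K V W : Type*} [Field K] [AddCommGroup V]
    [Module K V] [AddCommGroup W] [Module K W] (p : Submodule K V) [FiniteDimensional K p]
    (f : V →ₗ[K] W) :
    Module.finrank K ↥(p ⊓ LinearMap.ker f) + Module.finrank K (p.map f) = Module.finrank K p := by
  rw [← LinearMap.range_domRestrict, add_comm, ← (f.domRestrict p).finrank_range_add_finrank_ker,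
    LinearMap.ker_domRestrict]
  congr 1
  exact (Submodule.comapSubtypeEquivOfLe inf_le_left).finrank_eq.symm.trans (by
    rw [Submodule.comap_inf, Submodule.comap_subtype_self, top_inf_eq])

theorem Matrix.exists_mul_eq_one_of_linearIndependent_col {K m n : Type*} [Field K] [Fintype m]
    [Fintype n] [DecidableEq n] {M : Matrix m n K} (hM : LinearIndependent K M.col) :
    ∃ N : Matrix n m K, N * M = 1 := by
  obtain ⟨g, hg⟩ := M.mulVecLin.exists_leftInverse_of_injective
    (LinearMap.ker_eq_bot.2 (Matrix.mulVec_injective_iff.2 hM))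
  classical
  refine ⟨LinearMap.toMatrix' g, ?_⟩
  rw [← LinearMap.toMatrix'_toLin' M, ← LinearMap.toMatrix'_comp]
  exact (congrArg LinearMap.toMatrix' hg).trans LinearMap.toMatrix'_id

namespace MvPolynomial

instance instFiniteHomogeneousSubmodule (R σ : Type*) [CommSemiring R] [Finite σ] (d : ℕ) :
    Module.Finite R (homogeneousSubmodule σ R d) :=
  Module.Finite.iff_fg.2 (homogeneousSubmodule_fg σ R d)

theorem finrank_homogeneousSubmodule (R σ : Type*) [CommRing R] [Nontrivial R] [Fintype σ]
    (d : ℕ) :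
    Module.finrank R (homogeneousSubmodule σ R d) = (Fintype.card σ + d - 1).choose d := by
  classical
  let e : {m : σ →₀ ℕ | m.degree = d} ≃ Sym σ d :=
    (Equiv.subtypeEquivRight fun _ => Iff.rfl).trans (Sym.equivNatSum σ d).symm
  have : Fintype {m : σ →₀ ℕ | m.degree = d} := .ofEquiv _ e.symm
  rw [show homogeneousSubmodule σ R d = restrictSupport R {m | m.degree = d} from
      homogeneousSubmodule_eq_finsupp_supported σ R d,
    Module.finrank_eq_card_basis (basisRestrictSupport R _), Fintype.card_congr e,
    Sym.card_sym_eq_choose]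

section LinearForms

variable {R : Type*} [CommSemiring R] {σ ι κ : Type*}

noncomputable def linearForms [Fintype ι] (M : Matrix σ ι R) (i : σ) : MvPolynomial ι R :=
  ∑ j, C (M i j) * X j

theorem isHomogeneous_linearForms [Fintype ι] (M : Matrix σ ι R) (i : σ) :
    (linearForms M i).IsHomogeneous 1 :=
  IsHomogeneous.sum _ _ _ fun j _ => (isHomogeneous_X R j).C_mul _

theorem aeval_linearForms_one [Fintype σ] [DecidableEq σ] :
    aeval (linearForms (1 : Matrix σ σ R)) = AlgHom.id R _ := by
  apply algHom_ext
  intro i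
  simp [linearForms, Matrix.one_apply]

theorem aeval_linearForms_comp_aeval_linearForms [Fintype σ] [Fintype ι] (M : Matrix σ ι R)
    (N : Matrix κ σ R) :
    (aeval (linearForms M)).comp (aeval (linearForms N)) = aeval (linearForms (N * M)) := by
  rw [comp_aeval]
  congr 1
  funext j
  simp only [linearForms, map_sum, map_mul, aeval_C, aeval_X, algebraMap_eq, Finset.mul_sum,
    Matrix.mul_apply, Finset.sum_mul]
  rw [Finset.sum_comm]
  simp only [mul_assoc]

theorem map_aeval_linearForms_homogeneousSubmodule [Fintype σ] [Fintype ι] [DecidableEq ι]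
    {M : Matrix σ ι R} {N : Matrix ι σ R} (hNM : N * M = 1) (d : ℕ) :
    (homogeneousSubmodule σ R d).map (aeval (linearForms M)).toLinearMap =
      homogeneousSubmodule ι R d := by
  refine le_antisymm ?_ fun q hq => ⟨aeval (linearForms N) q, ?_, ?_⟩
  · rintro _ ⟨p, hp, rfl⟩
    simpa using (mem_homogeneousSubmodule d p).1 hp |>.aeval _ (isHomogeneous_linearForms M)
  · simpa using (mem_homogeneousSubmodule d q).1 hq |>.aeval _ (isHomogeneous_linearForms N)
  · change ((aeval (linearForms M)).comp (aeval (linearForms N))) q = q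
    rw [aeval_linearForms_comp_aeval_linearForms, hNM, aeval_linearForms_one, AlgHom.id_apply]

end LinearForms

end MvPolynomial

theorem line_ideal_degree_d_dimension_general (K : Type*) [Field K] (n : ℕ)
    (u v : Fin (n + 1) → K) (huv : LinearIndependent K ![u, v]) (d : ℕ) :
    Module.finrank K
      ↥(homogeneousSubmodule (Fin (n + 1)) K d ⊓
        LinearMap.ker (aeval (R := K) (fun i : Fin (n + 1) =>
          (C (u i) * X 0 + C (v i) * X 1 : MvPolynomial (Fin 2) K))).toLinearMap) =
      (n + d).choose n - (d + 1) := by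
  set M : Matrix (Fin (n + 1)) (Fin 2) K := Matrix.of fun i j => ![u, v] j i
  have hM : (fun i => C (u i) * X 0 + C (v i) * X 1) = linearForms M := by
    funext i
    simp [linearForms, M, Fin.sum_univ_two]
  obtain ⟨N, hNM⟩ := Matrix.exists_mul_eq_one_of_linearIndependent_col (M := M) huv
  have hrank := (homogeneousSubmodule (Fin (n + 1)) K d).finrank_inf_ker_add_finrank_map
    (aeval (linearForms M)).toLinearMap
  rw [map_aeval_linearForms_homogeneousSubmodule hNM, finrank_homogeneousSubmodule,
    finrank_homogeneousSubmodule, Fintype.card_fin, Fintype.card_fin,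
    show n + 1 + d - 1 = n + d by omega, show 2 + d - 1 = d + 1 by omega,
    Nat.choose_succ_self_right, ← Nat.choose_symm_add] at hrank
  rw [hM]
  omega

/-- the kernel of the restriction map from degree-`d` forms in `n + 1`
variables to binary degree-`d` forms along the line spanned by linearly independent
`u, v` has dimension `(n + d).choose n - (d + 1)`
(this is `h⁰(ℙⁿ, O(d) ⊗ I_ℓ) = h⁰(O(d)) - h⁰(O_ℓ(d))`). -/
theorem line_ideal_degree_d_dimension (K : Type*) [Field K] (n : ℕ) (hn : 1 ≤ n)
    (u v : Fin (n + 1) → K) (huv : LinearIndependent K ![u, v]) (d : ℕ) :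
    Module.finrank K
      ↥(homogeneousSubmodule (Fin (n + 1)) K d ⊓
        LinearMap.ker (aeval (R := K) (fun i : Fin (n + 1) =>
          (C (u i) * X 0 + C (v i) * X 1 : MvPolynomial (Fin 2) K))).toLinearMap) =
      (n + d).choose n - (d + 1) :=
  line_ideal_degree_d_dimension_general K n u v huv d
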